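/- Let k be a field of characteristic zero and φ ∈ k((t)) with ν(φ) = 1 (i.e. φ = a₁t + a₂t² + ... with a₁ ≠ 0). Then 1 + Σ_{l ≥ 1} [φ^{-l}]₀ · φ^l = φ · (∂φ/∂t)^{-1} · t^{-1}, where [h]₀ denotes the constant coefficient (coefficient of t⁰) of h ∈ k((t)). -/

import Mathlib

/-!
Let `θ = t d/dt` (`eulerDeriv`), so that `lderiv φ = t⁻¹ θφ` and the right-hand side is `φ / θφ`.
Since `θ(φⁿ) = n φⁿ⁻¹ θφ` and `θ` kills constant terms, `[θφ · φⁿ⁻¹]₀ = 0` for `n ≠ 0`, while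
`[θφ / φ]₀ = ν(φ) = 1`. Hence the coefficient of `φᵐ` in an expansion `f = Σ bₘ φᵐ` is
`bₘ = [f · θφ · φ^(-m-1)]₀` (`expansionCoeff`), which for `f = φ / θφ` is `[φ^(-m)]₀`.
Conversely this expansion does represent any power series `f`: a nonzero `g` of order `d` has
`[g · θφ · φ^(-d-1)]₀ ≠ 0`, being the leading coefficient of a series of order `0`; applied to `f`
minus its truncated expansion, this shows that the difference vanishes up to the truncation degree.
-/

open HahnSeries

/-- Termwise derivative of a Laurent series. -/
noncomputable def lderiv {A : Type*} [CommRing A] (f : LaurentSeries A) : LaurentSeries A where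
  coeff := fun l => (l + 1) • f.coeff (l + 1)
  isPWO_support' := by
    have h : (Function.support fun l : ℤ => (l + 1) • f.coeff (l + 1)) ⊆
        (fun l : ℤ => l - 1) '' f.support := by
      intro l hl
      have hc : f.coeff (l + 1) ≠ 0 := by
        intro h0; apply hl; simp [Function.mem_support, h0]
      exact ⟨l + 1, hc, by ring⟩
    refine (f.isPWO_support.image_of_monotoneOn ?_).mono h
    exact fun a _ b _ hab => by omega

theorem finsum_nat_eq_add_finsum_succ {M : Type*} [AddCommMonoid M] {f : ℕ → M}
    (hf : (Function.support f).Finite) : ∑ᶠ n, f n = f 0 + ∑ᶠ n, f (n + 1) := by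
  obtain ⟨N, hN⟩ := hf.bddAbove
  rw [finsum_eq_sum_of_support_subset f (s := Finset.range (N + 1)) fun n hn => by
      simpa [Nat.lt_succ_iff] using hN hn,
    finsum_eq_sum_of_support_subset (fun n => f (n + 1)) (s := Finset.range N) fun n hn => by
      simpa using hN hn,
    Finset.sum_range_succ', add_comm]

namespace LaurentSeries

section CommRing

variable {R : Type*} [CommRing R]

noncomputable def eulerDeriv (f : LaurentSeries R) : LaurentSeries R where
  coeff n := n • f.coeff n
  isPWO_support' := f.isPWO_support.mono fun n hn h => hn (by simp [h])

@[simp]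
theorem coeff_eulerDeriv (f : LaurentSeries R) (n : ℤ) :
    (eulerDeriv f).coeff n = n • f.coeff n := rfl

theorem support_eulerDeriv_subset (f : LaurentSeries R) : (eulerDeriv f).support ⊆ f.support :=
  fun n hn h => hn (by simp [h])

theorem eulerDeriv_mul (f g : LaurentSeries R) :
    eulerDeriv (f * g) = eulerDeriv f * g + f * eulerDeriv g := by
  ext n
  rw [coeff_add, coeff_eulerDeriv, coeff_mul,
    coeff_mul_left' f.isPWO_support (support_eulerDeriv_subset f),
    coeff_mul_right' g.isPWO_support (support_eulerDeriv_subset g),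
    Finset.smul_sum, ← Finset.sum_add_distrib]
  refine Finset.sum_congr rfl fun ij hij => ?_
  rw [Finset.mem_antidiagonal] at hij
  simp only [coeff_eulerDeriv, smul_mul_assoc, mul_smul_comm, ← add_smul, hij.2.2]

@[simp]
theorem eulerDeriv_zero : eulerDeriv (0 : LaurentSeries R) = 0 := by
  ext n
  simp

theorem eulerDeriv_one : eulerDeriv (1 : LaurentSeries R) = 0 := by
  ext n
  by_cases hn : n = 0 <;> simp [coeff_one, hn]

theorem eulerDeriv_single (d : ℤ) (r : R) : eulerDeriv (single d r) = d • single d r := by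
  ext n
  simp only [coeff_eulerDeriv, coeff_smul, coeff_single]
  split_ifs with h <;> simp [h]

theorem coeff_zero_eulerDeriv (f : LaurentSeries R) : (eulerDeriv f).coeff 0 = 0 := by
  simp

theorem lderiv_eq_single_mul_eulerDeriv (f : LaurentSeries R) :
    lderiv f = single (-1) 1 * eulerDeriv f := by
  ext n
  rw [coeff_single_mul, one_mul, coeff_eulerDeriv, sub_neg_eq_add]
  rfl

theorem ne_zero_of_order_ne_zero {f : LaurentSeries R} (h : f.order ≠ 0) : f ≠ 0 := by
  rintro rfl
  exact h order_zero

theorem coeff_zero_eulerDeriv_mul_eq_zero {f g : LaurentSeries R} (hf : 0 ≤ f.order)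
    (hg : 0 ≤ g.order) : (eulerDeriv f * g).coeff 0 = 0 := by
  have hDf : 1 ≤ (eulerDeriv f).orderTop := le_orderTop_iff_forall.2 fun j hj => by
    have hj : j < 1 := by exact_mod_cast hj
    rcases lt_or_eq_of_le (show j ≤ 0 by omega) with hj | rfl
    · simp [coeff_eq_zero_of_lt_order (hj.trans_le hf)]
    · simp
  have hg' : 0 ≤ g.orderTop := le_orderTop_iff_forall.2 fun j hj =>
    coeff_eq_zero_of_lt_order ((WithTop.coe_lt_coe.1 hj).trans_le hg)
  refine coeff_eq_zero_of_lt_orderTop ?_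
  calc ((0 : ℤ) : WithTop ℤ) < 1 + 0 := by norm_num
    _ ≤ (eulerDeriv f).orderTop + g.orderTop := add_le_add hDf hg'
    _ ≤ (eulerDeriv f * g).orderTop := orderTop_add_le_mul

end CommRing

section Field

variable {k : Type*} [Field k]

theorem order_inv (x : LaurentSeries k) : x⁻¹.order = -x.order := by
  rcases eq_or_ne x 0 with rfl | hx
  · simp
  have h := order_mul hx (inv_ne_zero hx)
  rw [mul_inv_cancel₀ hx, order_one] at h
  omega

theorem order_zpow (x : LaurentSeries k) (n : ℤ) : (x ^ n).order = n * x.order := by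
  cases n with
  | ofNat m => simp
  | negSucc m =>
    rw [zpow_negSucc, order_inv, order_pow, Int.negSucc_eq, nsmul_eq_mul]
    push_cast
    ring

theorem order_eulerDeriv {x : LaurentSeries k} (h : (x.order : k) ≠ 0) :
    (eulerDeriv x).order = x.order := by
  have hx : x ≠ 0 := by rintro rfl; simp at h
  have hlead : (eulerDeriv x).coeff x.order ≠ 0 := by
    simpa [zsmul_eq_mul, h] using coeff_order_eq_zero.not.2 hx
  refine le_antisymm (order_le_of_coeff_ne_zero hlead) ?_
  refine (le_order_iff_forall (ne_zero_of_coeff_ne_zero hlead)).2 ?_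
  intro j hj
  simp [coeff_eq_zero_of_lt_order hj]

theorem eulerDeriv_ne_zero {x : LaurentSeries k} (h : (x.order : k) ≠ 0) : eulerDeriv x ≠ 0 :=
  ne_zero_of_order_ne_zero fun h0 => h (by rw [← order_eulerDeriv h, h0, Int.cast_zero])

theorem order_mul_inv_eulerDeriv {x : LaurentSeries k} (h : (x.order : k) ≠ 0) :
    (x * (eulerDeriv x)⁻¹).order = 0 := by
  have hx : x ≠ 0 := ne_zero_of_order_ne_zero fun h0 => h (by rw [h0, Int.cast_zero])
  rw [order_mul hx (inv_ne_zero (eulerDeriv_ne_zero h)), order_inv, order_eulerDeriv h,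
    add_neg_cancel]

theorem mul_inv_lderiv_mul_single (f : LaurentSeries k) :
    f * (lderiv f)⁻¹ * single (-1) 1 = f * (eulerDeriv f)⁻¹ := by
  have : single (-1 : ℤ) (1 : k) ≠ 0 := single_ne_zero one_ne_zero
  rw [lderiv_eq_single_mul_eulerDeriv, mul_inv]
  field_simp

theorem eulerDeriv_zpow (x : LaurentSeries k) (n : ℤ) :
    eulerDeriv (x ^ n) = n • (x ^ (n - 1) * eulerDeriv x) := by
  rcases eq_or_ne x 0 with rfl | hx
  · rcases eq_or_ne n 0 with rfl | hn
    · simp [eulerDeriv_one]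
    · simp [zero_zpow n hn]
  induction n using Int.induction_on with
  | zero => simp [eulerDeriv_one]
  | succ n ih =>
    rw [zpow_add_one₀ hx, eulerDeriv_mul, ih, add_sub_cancel_right, zpow_sub_one₀ hx]
    simp only [zsmul_eq_mul]
    push_cast
    linear_combination ((n : LaurentSeries k) * x ^ (n : ℤ) * eulerDeriv x) * mul_inv_cancel₀ hx
  | pred n ih =>
    have h := eulerDeriv_mul (x ^ (-(n : ℤ) - 1)) x
    rw [← zpow_add_one₀ hx, sub_add_cancel, ih] at h
    rw [zpow_sub_one₀ hx (-(n : ℤ) - 1)]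
    simp only [zsmul_eq_mul] at h ⊢
    push_cast at h ⊢
    linear_combination (-x⁻¹) * h - eulerDeriv (x ^ (-(n : ℤ) - 1)) * mul_inv_cancel₀ hx

theorem coeff_zero_eulerDeriv_mul_inv (x : LaurentSeries k) :
    (eulerDeriv x * x⁻¹).coeff 0 = x.order := by
  rcases eq_or_ne x 0 with rfl | hx
  · simp
  set d := x.order
  set u := single (-d) (1 : k) * x with hu
  have hsingle : single d (1 : k) * single (-d) 1 = 1 := by
    simp [single_mul_single]
  have hxu : x = single d 1 * u := by rw [hu, ← mul_assoc, hsingle, one_mul]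
  have hu0 : u ≠ 0 := mul_ne_zero (single_ne_zero one_ne_zero) hx
  have hu_order : u.order = 0 := by
    simp [hu, order_mul (single_ne_zero one_ne_zero) hx,
      order_single, d]
  have hlog : eulerDeriv x * x⁻¹ = d + eulerDeriv u * u⁻¹ := by
    have hs0 : single d (1 : k) ≠ 0 := single_ne_zero one_ne_zero
    conv_lhs => rw [hxu]
    rw [eulerDeriv_mul, eulerDeriv_single, zsmul_eq_mul]
    field_simp
  rw [hlog, coeff_add, coeff_zero_eulerDeriv_mul_eq_zero hu_order.ge
    (by rw [order_inv, hu_order, neg_zero]), add_zero, ← single_zero_intCast,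
    coeff_single_same]

theorem coeff_zero_eulerDeriv_mul_zpow_sub_one [CharZero k] (x : LaurentSeries k) (n : ℤ) :
    (eulerDeriv x * x ^ (n - 1)).coeff 0 = if n = 0 then (x.order : k) else 0 := by
  split_ifs with hn
  · rw [hn, zero_sub, zpow_neg_one, coeff_zero_eulerDeriv_mul_inv]
  · have h := coeff_zero_eulerDeriv (x ^ n)
    rw [eulerDeriv_zpow, coeff_smul, mul_comm] at h
    exact (smul_eq_zero.1 h).resolve_left hn

theorem order_eulerDeriv_of_order_eq_one {φ : LaurentSeries k} (hφ : φ.order = 1) :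
    (eulerDeriv φ).order = 1 :=
  (order_eulerDeriv (by simp [hφ])).trans hφ

theorem coeff_pow_eq_zero_of_lt {φ : LaurentSeries k} (hφ : φ.order = 1) {m : ℕ} {i : ℤ}
    (h : i < m) : (φ ^ m).coeff i = 0 :=
  coeff_eq_zero_of_lt_order (by simpa [hφ] using h)

theorem support_mul_coeff_pow_subset {φ : LaurentSeries k} (hφ : φ.order = 1) (c : ℕ → k)
    (i : ℤ) : (Function.support fun m => c m * (φ ^ m).coeff i) ⊆ Finset.range (i.toNat + 1) :=
  fun m hm => by
    by_contra h
    simp only [Finset.coe_range, Set.mem_Iio, not_lt] at h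
    exact hm (by dsimp only; rw [coeff_pow_eq_zero_of_lt hφ (by omega), mul_zero])

noncomputable def expansionCoeff (φ f : LaurentSeries k) (m : ℕ) : k :=
  (f * eulerDeriv φ * φ ^ (-(m : ℤ) - 1)).coeff 0

theorem expansionCoeff_sub (φ f g : LaurentSeries k) (m : ℕ) :
    expansionCoeff φ (f - g) m = expansionCoeff φ f m - expansionCoeff φ g m := by
  simp [expansionCoeff, sub_mul]

theorem expansionCoeff_sum {ι : Type*} (φ : LaurentSeries k) (s : Finset ι)
    (f : ι → LaurentSeries k) (m : ℕ) :
    expansionCoeff φ (∑ i ∈ s, f i) m = ∑ i ∈ s, expansionCoeff φ (f i) m := by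
  simp [expansionCoeff, Finset.sum_mul, coeff_sum]

theorem expansionCoeff_single_zero_mul (φ f : LaurentSeries k) (c : k) (m : ℕ) :
    expansionCoeff φ (single 0 c * f) m = c * expansionCoeff φ f m := by
  simp only [expansionCoeff, mul_assoc, coeff_single_zero_mul]

theorem expansionCoeff_pow [CharZero k] {φ : LaurentSeries k} (hφ : φ.order = 1) (m j : ℕ) :
    expansionCoeff φ (φ ^ m) j = if m = j then 1 else 0 := by
  have hφ0 : φ ≠ 0 := ne_zero_of_order_ne_zero (by simp [hφ])
  have h : φ ^ m * eulerDeriv φ * φ ^ (-(j : ℤ) - 1) = eulerDeriv φ * φ ^ ((m - j : ℤ) - 1) := by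
    rw [← zpow_natCast, mul_comm (φ ^ (m : ℤ)), mul_assoc, ← zpow_add₀ hφ0]
    ring_nf
  rw [expansionCoeff, h, coeff_zero_eulerDeriv_mul_zpow_sub_one, hφ]
  simp [sub_eq_zero]

theorem expansionCoeff_ne_zero_of_order_eq {φ g : LaurentSeries k} (hφ : φ.order = 1)
    (hg : g ≠ 0) {j : ℕ} (hj : g.order = j) : expansionCoeff φ g j ≠ 0 := by
  have hφ0 : φ ≠ 0 := ne_zero_of_order_ne_zero (by simp [hφ])
  have hDφ := order_eulerDeriv_of_order_eq_one hφ
  have hDφ0 : eulerDeriv φ ≠ 0 := eulerDeriv_ne_zero (by simp [hφ])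
  have hP := mul_ne_zero (mul_ne_zero hg hDφ0) (zpow_ne_zero (-(j : ℤ) - 1) hφ0)
  have hP_order : (g * eulerDeriv φ * φ ^ (-(j : ℤ) - 1)).order = 0 := by
    rw [order_mul (mul_ne_zero hg hDφ0) (zpow_ne_zero _ hφ0), order_mul hg hDφ0, order_zpow,
      hDφ, hφ, hj]
    ring
  simpa [expansionCoeff, hP_order] using coeff_order_eq_zero.not.2 hP

theorem expansionCoeff_mul_inv_eulerDeriv {φ : LaurentSeries k} (hφ0 : φ ≠ 0)
    (hDφ0 : eulerDeriv φ ≠ 0) (m : ℕ) :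
    expansionCoeff φ (φ * (eulerDeriv φ)⁻¹) m = (φ⁻¹ ^ m).coeff 0 := by
  rw [expansionCoeff, inv_pow, ← zpow_natCast, ← zpow_neg, zpow_sub_one₀ hφ0]
  congr 1
  field_simp

theorem coeff_eq_zero_of_expansionCoeff_eq_zero {φ g : LaurentSeries k} (hφ : φ.order = 1)
    (hg : ∀ i < 0, g.coeff i = 0) {N : ℕ} (h : ∀ j ≤ N, expansionCoeff φ g j = 0) {i : ℤ}
    (hi : i ≤ N) : g.coeff i = 0 := by
  by_contra hgi
  have hg0 : g ≠ 0 := ne_zero_of_coeff_ne_zero hgi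
  obtain ⟨j, hj⟩ := Int.eq_ofNat_of_zero_le ((le_order_iff_forall hg0).2 hg)
  have hjN : j ≤ N := by
    have := order_le_of_coeff_ne_zero hgi
    omega
  exact expansionCoeff_ne_zero_of_order_eq hφ hg0 hj (h j hjN)

theorem coeff_eq_finsum_expansionCoeff_mul_coeff_pow [CharZero k] {φ f : LaurentSeries k}
    (hφ : φ.order = 1) (hf : 0 ≤ f.order) (i : ℤ) :
    f.coeff i = ∑ᶠ m : ℕ, expansionCoeff φ f m * (φ ^ m).coeff i := by
  rcases lt_or_ge i 0 with hi | hi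
  · rw [coeff_eq_zero_of_lt_order (hi.trans_le hf)]
    exact (finsum_eq_zero_of_forall_eq_zero fun m =>
      by rw [coeff_pow_eq_zero_of_lt hφ (by omega), mul_zero]).symm
  obtain ⟨N, rfl⟩ := Int.eq_ofNat_of_zero_le hi
  rw [finsum_eq_sum_of_support_subset _ (support_mul_coeff_pow_subset hφ _ _), Int.toNat_natCast]
  set g := f - ∑ m ∈ Finset.range (N + 1), single 0 (expansionCoeff φ f m) * φ ^ m
  have hg : ∀ i < 0, g.coeff i = 0 := fun i hi => by
    simp [g, coeff_sum, coeff_eq_zero_of_lt_order (hi.trans_le hf),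
      coeff_pow_eq_zero_of_lt hφ (hi.trans_le (Nat.cast_nonneg _))]
  have hg_expansion (j : ℕ) (hj : j ≤ N) : expansionCoeff φ g j = 0 := by
    simp only [g, expansionCoeff_sub, expansionCoeff_sum, expansionCoeff_single_zero_mul,
      expansionCoeff_pow hφ]
    simp [Nat.lt_succ_of_le hj]
  simpa [g, sub_eq_zero, coeff_sum] using
    coeff_eq_zero_of_expansionCoeff_eq_zero hφ hg hg_expansion le_rfl

end Field

end LaurentSeries

open LaurentSeries in
/-- For a field `k` of characteristic zero and `φ ∈ k((t))` with `ν(φ) = 1`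
(i.e. `φ = a₁t + a₂t² + ⋯` with `a₁ ≠ 0`), one has
`1 + Σ_{l ≥ 1} [φ^{-l}]₀ · φˡ = φ · (∂φ/∂t)⁻¹ · t⁻¹`, where the series `S` on the left
converges coefficientwise. -/
theorem constant_terms_identity {k : Type*} [Field k] [CharZero k]
    (φ : LaurentSeries k) (h1 : φ.coeff 1 ≠ 0) (hlow : ∀ l : ℤ, l < 1 → φ.coeff l = 0) :
    ∃ S : LaurentSeries k,
      (∀ i : ℤ, (Function.support fun l : ℕ =>
          (φ⁻¹ ^ (l + 1)).coeff 0 * (φ ^ (l + 1)).coeff i).Finite) ∧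
      (∀ i : ℤ, S.coeff i = ∑ᶠ l : ℕ, (φ⁻¹ ^ (l + 1)).coeff 0 * (φ ^ (l + 1)).coeff i) ∧
      1 + S = φ * (lderiv φ)⁻¹ * HahnSeries.single (-1) 1 := by
  have hφ0 : φ ≠ 0 := ne_zero_of_coeff_ne_zero h1
  have hφ : φ.order = 1 :=
    le_antisymm (order_le_of_coeff_ne_zero h1) ((le_order_iff_forall hφ0).2 hlow)
  have hsupp (i : ℤ) :
      (Function.support fun m : ℕ => (φ⁻¹ ^ m).coeff 0 * (φ ^ m).coeff i).Finite :=
    (Finset.finite_toSet _).subset (support_mul_coeff_pow_subset hφ _ i)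
  refine ⟨φ * (lderiv φ)⁻¹ * single (-1) 1 - 1,
    fun i => (hsupp i).preimage Nat.succ_injective.injOn, fun i => ?_, by ring⟩
  rw [coeff_sub, mul_inv_lderiv_mul_single, coeff_eq_finsum_expansionCoeff_mul_coeff_pow hφ
    (order_mul_inv_eulerDeriv (by simp [hφ])).ge]
  simp only [expansionCoeff_mul_inv_eulerDeriv hφ0 (eulerDeriv_ne_zero (by simp [hφ]))]
  rw [finsum_nat_eq_add_finsum_succ (hsupp i), pow_zero, pow_zero, coeff_one, if_pos rfl,
    one_mul, add_sub_cancel_left]
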